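/- arXiv:1604.03117 — 5 statements merged into one kernel-verified Lean document; each statement's English description precedes it below -/
import Mathlib

section
/- Let p, q, τ, π : ℝ → ℝ be differentiable with q(t) > 0 for all t, and suppose that for all t: π(t) = −q(t)p(t) and π'(t) = (2/3)(p(t)q'(t) + π(t)τ'(t)). Then the function t ↦ p(t)·q(t)^{5/3}·e^{−(2/3)τ(t)} is constant; equivalently, there exists a constant A ∈ ℝ such that p(t) = −A e^{(2/3)τ(t)} q(t)^{−5/3} for all t. -/
/-- Integration step for the ideal gas: from π = −qp and
dπ/dt = (2/3)(p dq/dt + π dτ/dt) it follows that p q^{5/3} e^{−(2/3)τ} is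
constant, i.e. p = −A e^{(2/3)τ} q^{−5/3} for some constant A. -/
theorem stmt_5 (p q τ π : ℝ → ℝ)
    (hp : Differentiable ℝ p) (hq : Differentiable ℝ q)
    (hτ : Differentiable ℝ τ) (hπ : Differentiable ℝ π)
    (hpos : ∀ t, 0 < q t)
    (h1 : ∀ t, π t = -(q t * p t))
    (h2 : ∀ t, deriv π t = (2/3) * (p t * deriv q t + π t * deriv τ t)) :
    (∀ t s : ℝ, p t * q t ^ ((5:ℝ)/3) * Real.exp (-(2/3) * τ t)
          = p s * q s ^ ((5:ℝ)/3) * Real.exp (-(2/3) * τ s)) ∧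
    ∃ A : ℝ, ∀ t, p t = -A * Real.exp ((2/3) * τ t) * q t ^ (-(5:ℝ)/3) := by
  set F : ℝ → ℝ := fun t => p t * q t ^ ((5:ℝ)/3) * Real.exp (-(2/3) * τ t) with hF
  -- key ODE relation
  have key : ∀ t, q t * deriv p t =
      -(5/3) * p t * deriv q t + (2/3) * q t * p t * deriv τ t := by
    intro t
    have hd : HasDerivAt π (-(deriv q t * p t + q t * deriv p t)) t := by
      have : π = fun t => -(q t * p t) := funext h1
      rw [this]
      exact (((hq t).hasDerivAt).mul ((hp t).hasDerivAt)).neg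
    have hπd : deriv π t = -(deriv q t * p t + q t * deriv p t) := hd.deriv
    have h2' := h2 t
    rw [hπd, h1 t] at h2'
    linarith
  have hder : ∀ t, HasDerivAt F 0 t := by
    intro t
    have hqne : q t ≠ 0 := (hpos t).ne'
    have h1d : HasDerivAt (fun t => q t ^ ((5:ℝ)/3))
        (deriv q t * ((5:ℝ)/3) * q t ^ ((5:ℝ)/3 - 1)) t :=
      ((hq t).hasDerivAt).rpow_const (Or.inl hqne)
    have h2d : HasDerivAt (fun t => p t * q t ^ ((5:ℝ)/3))
        (deriv p t * q t ^ ((5:ℝ)/3) + p t * (deriv q t * ((5:ℝ)/3) * q t ^ ((5:ℝ)/3 - 1))) t :=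
      ((hp t).hasDerivAt).mul h1d
    have h3d : HasDerivAt (fun t => Real.exp (-(2/3) * τ t))
        (Real.exp (-(2/3) * τ t) * (-(2/3) * deriv τ t)) t := by
      have : HasDerivAt (fun t => -(2/3) * τ t) (-(2/3) * deriv τ t) t :=
        ((hτ t).hasDerivAt).const_mul _
      exact this.exp
    have hmul := h2d.mul h3d
    have hval : (deriv p t * q t ^ ((5:ℝ)/3) + p t * (deriv q t * ((5:ℝ)/3) * q t ^ ((5:ℝ)/3 - 1)))
          * Real.exp (-(2/3) * τ t)
        + (p t * q t ^ ((5:ℝ)/3)) * (Real.exp (-(2/3) * τ t) * (-(2/3) * deriv τ t)) = 0 := by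
      have e1 : q t ^ ((5:ℝ)/3) = q t ^ ((5:ℝ)/3 - 1) * q t := by
        rw [← Real.rpow_add_one hqne]; norm_num
      rw [e1]
      linear_combination (Real.exp (-(2/3) * τ t) * q t ^ ((5:ℝ)/3 - 1)) * key t
    rw [hval] at hmul
    exact hmul
  have hconst : ∀ t s : ℝ, F t = F s := by
    intro t s
    exact is_const_of_deriv_eq_zero (fun x => (hder x).differentiableAt)
      (fun x => (hder x).deriv) t s
  refine ⟨hconst, ⟨-(F 0), fun t => ?_⟩⟩
  have h := hconst t 0
  have hqpow : q t ^ ((5:ℝ)/3) ≠ 0 := (Real.rpow_pos_of_pos (hpos t) _).ne'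
  have hrw : q t ^ (-(5:ℝ)/3) = (q t ^ ((5:ℝ)/3))⁻¹ := by
    rw [← Real.rpow_neg (hpos t).le]; norm_num
  have hee : Real.exp (-(2/3) * τ t) * Real.exp ((2/3) * τ t) = 1 := by
    rw [← Real.exp_add]; ring_nf; exact Real.exp_zero
  rw [hrw, neg_neg, ← h]
  calc p t = p t * (q t ^ ((5:ℝ)/3) * (q t ^ ((5:ℝ)/3))⁻¹)
        * (Real.exp (-(2/3) * τ t) * Real.exp ((2/3) * τ t)) := by
        rw [mul_inv_cancel₀ hqpow, hee]; ring
    _ = F t * Real.exp ((2/3) * τ t) * (q t ^ ((5:ℝ)/3))⁻¹ := by rw [hF]; ring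
end

section
/- Fix A ∈ ℝ and define, on the open set {(q,p,τ,π) ∈ ℝ⁴ : q > 0}, the functions H(q,p,τ,π) = π − A e^{(2/3)τ} q^{−2/3} and φ(q,p,τ,π) = p + A e^{(2/3)τ} q^{−5/3}. Then the canonical Poisson bracket {H, φ} vanishes identically on this set: {H, φ}(q,p,τ,π) = 0 for all (q,p,τ,π) with q > 0. -/
/-!
Both constraints have the form `π - f(q, τ)` and `p + g(q, τ)`, so their bracket collapses to
`-(∂f/∂q + ∂g/∂τ)`. With `f = A e^{aτ} q^{-a}` and `g = A e^{aτ} q^{-a-1}` (here `a = 2/3`),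
both partial derivatives equal `∓ a A e^{aτ} q^{-a-1}`, and they cancel.
-/

/-- Canonical Poisson bracket on ℝ⁴ with coordinates (q,p,τ,π):
{F,G} = ∂F/∂q ∂G/∂p − ∂F/∂p ∂G/∂q + ∂F/∂τ ∂G/∂π − ∂F/∂π ∂G/∂τ. -/
noncomputable def pb4 (F G : ℝ → ℝ → ℝ → ℝ → ℝ) (q p τ π : ℝ) : ℝ :=
  deriv (fun x => F x p τ π) q * deriv (fun x => G q x τ π) p
  - deriv (fun x => F q x τ π) p * deriv (fun x => G x p τ π) q
  + deriv (fun x => F q p x π) τ * deriv (fun x => G q p τ x) π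
  - deriv (fun x => F q p τ x) π * deriv (fun x => G q p x π) τ

theorem pb4_sub_add (f g : ℝ → ℝ → ℝ) (q p τ π : ℝ) :
    pb4 (fun q _ τ π => π - f q τ) (fun q p τ _ => p + g q τ) q p τ π
      = -(deriv (fun x => f x τ) q + deriv (fun x => g q x) τ) := by
  simp only [pb4, deriv_const_sub, deriv_const_add, deriv_const, deriv_sub_const,
    deriv_add_const, deriv_id'']
  ring

theorem deriv_const_mul_rpow_neg (c a : ℝ) {q : ℝ} (hq : q ≠ 0) :
    deriv (fun x => c * x ^ (-a)) q = -a * (c * q ^ (-a - 1)) := by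
  rw [((Real.hasDerivAt_rpow_const (p := -a) (Or.inl hq)).const_mul c).deriv]
  ring

theorem deriv_const_mul_exp_mul_mul_const (A a c τ : ℝ) :
    deriv (fun x => A * Real.exp (a * x) * c) τ = a * (A * Real.exp (a * τ) * c) := by
  have hexp : HasDerivAt (fun x => Real.exp (a * x)) (Real.exp (a * τ) * a) τ :=
    (Real.hasDerivAt_exp _).comp τ ((hasDerivAt_id τ).const_mul a |>.congr_deriv (mul_one a))
  rw [((hexp.const_mul A).mul_const c).deriv]
  ring

/-- The ideal gas constraints H = π − A e^{(2/3)τ} q^{−2/3} and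
φ = p + A e^{(2/3)τ} q^{−5/3} are first-class: {H,φ} = 0 for q > 0. -/
theorem stmt_6 (A : ℝ) (H φ : ℝ → ℝ → ℝ → ℝ → ℝ)
    (hH : ∀ q p τ π, H q p τ π = π - A * Real.exp ((2/3) * τ) * q ^ (-(2:ℝ)/3))
    (hφ : ∀ q p τ π, φ q p τ π = p + A * Real.exp ((2/3) * τ) * q ^ (-(5:ℝ)/3)) :
    ∀ q p τ π : ℝ, 0 < q → pb4 H φ q p τ π = 0 := by
  intro q p τ π hq
  have h2 : -(2:ℝ)/3 = -(2/3) := by norm_num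
  have h5 : -(5:ℝ)/3 = -(2/3) - 1 := by norm_num
  obtain rfl : H = fun q _ τ π => π - A * Real.exp ((2/3) * τ) * q ^ (-(2/3 : ℝ)) := by
    funext q p τ π; rw [hH, h2]
  obtain rfl : φ = fun q p τ _ => p + A * Real.exp ((2/3) * τ) * q ^ (-(2/3 : ℝ) - 1) := by
    funext q p τ π; rw [hφ, h5]
  rw [pb4_sub_add, deriv_const_mul_rpow_neg _ _ hq.ne', deriv_const_mul_exp_mul_mul_const]
  ring
end

section
/- Fix a, b, c ∈ ℝ and define Ψ on the open set {(q',p',τ',π') ∈ ℝ⁴ : p' ≠ 0 and τ' + b ≠ c} by Ψ(q',p',τ',π') = (q̃, p̃, τ̃, π̃) with q̃ = q' + a p'^{−2} (τ'+b−c)^{−1}, p̃ = p', τ̃ = τ' + b, π̃ = π' − a p'^{−1} (τ'+b−c)^{−2}. Then Ψ preserves the canonical symplectic form: at every point of the domain, the Fréchet derivative L of Ψ satisfies ω(L u, L w) = ω(u, w) for all u, w ∈ ℝ⁴. -/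
/-- Canonical symplectic bilinear form on ℝ⁴ with coordinates (q,p,τ,π),
corresponding to dp∧dq + dπ∧dτ. -/
def ω4 (u w : ℝ × ℝ × ℝ × ℝ) : ℝ :=
  u.2.1 * w.1 - u.1 * w.2.1 + u.2.2.2 * w.2.2.1 - u.2.2.1 * w.2.2.2

/-!
Ψ is the translation τ ↦ τ + b followed by a shear `q ↦ q + f(p, τ)`, `π ↦ π + g(p, τ)`.
The derivative of such a shear changes `ω4 u w` by `(∂_τ f + ∂_p g) (u₂ w₃ - u₃ w₂)`,
so it is symplectic exactly when `∂_τ f + ∂_p g = 0`. For the Clausius corrections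
`f = a p⁻² (τ + b - c)⁻¹` and `g = -a p⁻¹ (τ + b - c)⁻²` both partials equal `∓ a p⁻² (τ + b - c)⁻²`.
-/

theorem ContinuousLinearMap.map_prod_eq_mul_add_mul (F : ℝ × ℝ →L[ℝ] ℝ) (s t : ℝ) :
    F (s, t) = s * F (1, 0) + t * F (0, 1) := by
  have hst : ((s, t) : ℝ × ℝ) = s • (1, 0) + t • (0, 1) := by simp
  rw [hst, map_add, map_smul, map_smul, smul_eq_mul, smul_eq_mul]

theorem ω4_shear_eq (F G : ℝ × ℝ →L[ℝ] ℝ) (hFG : F (0, 1) + G (1, 0) = 0)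
    (u w : ℝ × ℝ × ℝ × ℝ) :
    ω4 (u.1 + F (u.2.1, u.2.2.1), u.2.1, u.2.2.1, u.2.2.2 + G (u.2.1, u.2.2.1))
      (w.1 + F (w.2.1, w.2.2.1), w.2.1, w.2.2.1, w.2.2.2 + G (w.2.1, w.2.2.1)) = ω4 u w := by
  simp only [ω4]
  rw [F.map_prod_eq_mul_add_mul u.2.1, F.map_prod_eq_mul_add_mul w.2.1,
    G.map_prod_eq_mul_add_mul u.2.1, G.map_prod_eq_mul_add_mul w.2.1]
  linear_combination (u.2.1 * w.2.2.1 - u.2.2.1 * w.2.1) * hFG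

theorem fderiv_apply_zero_one {f : ℝ × ℝ → ℝ} {y : ℝ × ℝ} {d : ℝ}
    (hf : DifferentiableAt ℝ f y) (hd : HasDerivAt (fun t => f (y.1, t)) d y.2) :
    fderiv ℝ f y (0, 1) = d :=
  (hf.hasFDerivAt.comp_hasDerivAt y.2
    ((hasDerivAt_const y.2 y.1).prodMk (hasDerivAt_id y.2))).unique hd

theorem fderiv_apply_one_zero {f : ℝ × ℝ → ℝ} {y : ℝ × ℝ} {d : ℝ}
    (hf : DifferentiableAt ℝ f y) (hd : HasDerivAt (fun s => f (s, y.2)) d y.1) :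
    fderiv ℝ f y (1, 0) = d :=
  (hf.hasFDerivAt.comp_hasDerivAt y.1
    ((hasDerivAt_id y.1).prodMk (hasDerivAt_const y.1 y.2))).unique hd

def shearMap (b : ℝ) (f g : ℝ × ℝ → ℝ) (x : ℝ × ℝ × ℝ × ℝ) : ℝ × ℝ × ℝ × ℝ :=
  (x.1 + f (x.2.1, x.2.2.1), x.2.1, x.2.2.1 + b, x.2.2.2 + g (x.2.1, x.2.2.1))

section shearMap

variable {b : ℝ} {f g : ℝ × ℝ → ℝ} {x : ℝ × ℝ × ℝ × ℝ}

theorem fderiv_shearMap_apply (hf : DifferentiableAt ℝ f (x.2.1, x.2.2.1))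
    (hg : DifferentiableAt ℝ g (x.2.1, x.2.2.1)) (u : ℝ × ℝ × ℝ × ℝ) :
    fderiv ℝ (shearMap b f g) x u =
      (u.1 + fderiv ℝ f (x.2.1, x.2.2.1) (u.2.1, u.2.2.1), u.2.1, u.2.2.1,
        u.2.2.2 + fderiv ℝ g (x.2.1, x.2.2.1) (u.2.1, u.2.2.1)) := by
  let S : (ℝ × ℝ × ℝ × ℝ) →L[ℝ] ℝ × ℝ × ℝ := .snd ℝ ℝ _
  let T : (ℝ × ℝ × ℝ × ℝ) →L[ℝ] ℝ × ℝ := (ContinuousLinearMap.snd ℝ ℝ _).comp S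
  let p : (ℝ × ℝ × ℝ × ℝ) →L[ℝ] ℝ := (ContinuousLinearMap.fst ℝ ℝ _).comp S
  let τ : (ℝ × ℝ × ℝ × ℝ) →L[ℝ] ℝ := (ContinuousLinearMap.fst ℝ ℝ _).comp T
  let π : (ℝ × ℝ × ℝ × ℝ) →L[ℝ] ℝ := (ContinuousLinearMap.snd ℝ ℝ _).comp T
  have hpτ : HasFDerivAt (fun x : ℝ × ℝ × ℝ × ℝ => (x.2.1, x.2.2.1)) (p.prod τ) x :=
    (p.prod τ).hasFDerivAt
  have H : HasFDerivAt (shearMap b f g) _ x :=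
    ((ContinuousLinearMap.fst ℝ ℝ _).hasFDerivAt.add (hf.hasFDerivAt.comp x hpτ)).prodMk
      (p.hasFDerivAt.prodMk ((τ.hasFDerivAt.add_const b).prodMk
        (π.hasFDerivAt.add (hg.hasFDerivAt.comp x hpτ))))
  rw [H.fderiv]
  rfl

theorem ω4_fderiv_shearMap (hf : DifferentiableAt ℝ f (x.2.1, x.2.2.1))
    (hg : DifferentiableAt ℝ g (x.2.1, x.2.2.1)) {fτ gp : ℝ}
    (hfτ : HasDerivAt (fun t => f (x.2.1, t)) fτ x.2.2.1)
    (hgp : HasDerivAt (fun s => g (s, x.2.2.1)) gp x.2.1) (hfg : fτ + gp = 0)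
    (u w : ℝ × ℝ × ℝ × ℝ) :
    ω4 (fderiv ℝ (shearMap b f g) x u) (fderiv ℝ (shearMap b f g) x w) = ω4 u w := by
  rw [fderiv_shearMap_apply hf hg, fderiv_shearMap_apply hf hg]
  refine ω4_shear_eq _ _ ?_ u w
  rwa [fderiv_apply_zero_one hf hfτ, fderiv_apply_one_zero hg hgp]

end shearMap

noncomputable def clausiusShiftQ (a b c : ℝ) (y : ℝ × ℝ) : ℝ := a / (y.1 ^ 2 * (y.2 + b - c))

noncomputable def clausiusShiftPi (a b c : ℝ) (y : ℝ × ℝ) : ℝ := -(a / (y.1 * (y.2 + b - c) ^ 2))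

section clausius

variable {a b c : ℝ}

theorem differentiableAt_clausiusShiftQ {y : ℝ × ℝ} (hp : y.1 ≠ 0) (hτ : y.2 + b - c ≠ 0) :
    DifferentiableAt ℝ (clausiusShiftQ a b c) y := by
  unfold clausiusShiftQ
  fun_prop (disch := simp [hp, hτ])

theorem differentiableAt_clausiusShiftPi {y : ℝ × ℝ} (hp : y.1 ≠ 0) (hτ : y.2 + b - c ≠ 0) :
    DifferentiableAt ℝ (clausiusShiftPi a b c) y := by
  unfold clausiusShiftPi
  fun_prop (disch := simp [hp, hτ])

theorem hasDerivAt_clausiusShiftQ_snd {p τ : ℝ} (hp : p ≠ 0) (hτ : τ + b - c ≠ 0) :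
    HasDerivAt (fun t => clausiusShiftQ a b c (p, t)) (-(a / (p ^ 2 * (τ + b - c) ^ 2))) τ := by
  have hd : HasDerivAt (fun t => p ^ 2 * (t + b - c)) (p ^ 2) τ := by
    simpa using (((hasDerivAt_id τ).add_const b).sub_const c).const_mul (p ^ 2)
  refine ((hasDerivAt_const τ a).fun_div hd (by simp [hp, hτ])).congr_deriv ?_
  field_simp
  ring

theorem hasDerivAt_clausiusShiftPi_fst {p τ : ℝ} (hp : p ≠ 0) (hτ : τ + b - c ≠ 0) :
    HasDerivAt (fun s => clausiusShiftPi a b c (s, τ)) (a / (p ^ 2 * (τ + b - c) ^ 2)) p := by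
  have hd : HasDerivAt (fun s => s * (τ + b - c) ^ 2) ((τ + b - c) ^ 2) p := by
    simpa using (hasDerivAt_id p).mul_const ((τ + b - c) ^ 2)
  refine ((hasDerivAt_const p a).fun_div hd (by simp [hp, hτ])).fun_neg.congr_deriv ?_
  field_simp
  ring

end clausius

/-- The transformation (trans) relating the ideal gas to the Clausius gas,
q̃ = q' + a p'^{−2}(τ'+b−c)^{−1}, p̃ = p', τ̃ = τ'+b,
π̃ = π' − a p'^{−1}(τ'+b−c)^{−2}, preserves the canonical symplectic form. -/
theorem stmt_14 (a b c : ℝ) (Ψ : ℝ × ℝ × ℝ × ℝ → ℝ × ℝ × ℝ × ℝ)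
    (hΨ : ∀ x : ℝ × ℝ × ℝ × ℝ,
      Ψ x = (x.1 + a / (x.2.1 ^ 2 * (x.2.2.1 + b - c)), x.2.1, x.2.2.1 + b,
             x.2.2.2 - a / (x.2.1 * (x.2.2.1 + b - c) ^ 2))) :
    ∀ x : ℝ × ℝ × ℝ × ℝ, x.2.1 ≠ 0 → x.2.2.1 + b ≠ c →
      ∀ u w : ℝ × ℝ × ℝ × ℝ, ω4 (fderiv ℝ Ψ x u) (fderiv ℝ Ψ x w) = ω4 u w := by
  intro x hp hτ u w
  have hτ' : x.2.2.1 + b - c ≠ 0 := sub_ne_zero.mpr hτ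
  have hΨ_eq : Ψ = shearMap b (clausiusShiftQ a b c) (clausiusShiftPi a b c) := by
    funext y
    rw [hΨ, shearMap, clausiusShiftQ, clausiusShiftPi, ← sub_eq_add_neg]
  subst hΨ_eq
  exact ω4_fderiv_shearMap (differentiableAt_clausiusShiftQ hp hτ')
    (differentiableAt_clausiusShiftPi hp hτ') (hasDerivAt_clausiusShiftQ_snd hp hτ')
    (hasDerivAt_clausiusShiftPi_fst hp hτ') (neg_add_cancel _) u w
end

section
/- Fix A > 0, a, b, c ∈ ℝ, and define, for T > 0 and v > max(b, c): u(T, v) = (3/2)T + 2a/(T(v − c)) and s(T, v) = a/(T²(v − c)) + ln(v − b) + (3/2) ln(T/A). Then for all such (T, v): ∂u/∂T = T · ∂s/∂T, and ∂u/∂v = T · ∂s/∂v − P(T,v), where P(T, v) = T/(v − b) + a/(T(v − c)²). That is, the first law du = T ds − P dv holds for the Clausius gas. -/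
/-! A direct computation of partial derivatives. In the temperature direction
∂u/∂T = 3/2 − 2a/(T²(v−c)) is T times ∂s/∂T = 3/(2T) − 2a/(T³(v−c)). In the volume
direction the ideal-gas terms T/(v−b) of T ∂s/∂v and of P cancel, and the two interaction
terms −a/(T(v−c)²) add up to ∂u/∂v = −2a/(T(v−c)²). -/

namespace ClausiusGas

noncomputable def energy (a c T v : ℝ) : ℝ := 3 / 2 * T + 2 * a / (T * (v - c))

noncomputable def entropy (A a b c T v : ℝ) : ℝ :=
  a / (T ^ 2 * (v - c)) + Real.log (v - b) + 3 / 2 * Real.log (T / A)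

noncomputable def pressure (a b c T v : ℝ) : ℝ := T / (v - b) + a / (T * (v - c) ^ 2)

variable {A a b c T v : ℝ}

theorem hasDerivAt_energy_temperature (hT : T ≠ 0) (hvc : v - c ≠ 0) :
    HasDerivAt (fun T => energy a c T v) (3 / 2 - 2 * a / (T ^ 2 * (v - c))) T := by
  refine (((hasDerivAt_id' T).const_mul (3 / 2)).add
    ((hasDerivAt_const T (2 * a)).div ((hasDerivAt_id' T).mul_const (v - c))
      (mul_ne_zero hT hvc))).congr_deriv ?_
  field_simp
  ring

theorem hasDerivAt_entropy_temperature (hA : A ≠ 0) (hT : T ≠ 0) (hvc : v - c ≠ 0) :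
    HasDerivAt (fun T => entropy A a b c T v) (3 / (2 * T) - 2 * a / (T ^ 3 * (v - c))) T := by
  refine ((((hasDerivAt_const T a).div ((hasDerivAt_pow 2 T).mul_const (v - c))
      (mul_ne_zero (pow_ne_zero 2 hT) hvc)).add_const (Real.log (v - b))).add
    ((((hasDerivAt_id' T).div_const A).log (div_ne_zero hT hA)).const_mul (3 / 2))).congr_deriv ?_
  field_simp
  ring

theorem hasDerivAt_energy_volume (hT : T ≠ 0) (hvc : v - c ≠ 0) :
    HasDerivAt (fun v => energy a c T v) (-(2 * a / (T * (v - c) ^ 2))) v := by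
  refine (((hasDerivAt_const v (2 * a)).div (((hasDerivAt_id' v).sub_const c).const_mul T)
      (mul_ne_zero hT hvc)).const_add (3 / 2 * T)).congr_deriv ?_
  field_simp
  ring

theorem hasDerivAt_entropy_volume (hT : T ≠ 0) (hvb : v - b ≠ 0) (hvc : v - c ≠ 0) :
    HasDerivAt (fun v => entropy A a b c T v) (1 / (v - b) - a / (T ^ 2 * (v - c) ^ 2)) v := by
  refine ((((hasDerivAt_const v a).div (((hasDerivAt_id' v).sub_const c).const_mul (T ^ 2))
      (mul_ne_zero (pow_ne_zero 2 hT) hvc)).add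
    (((hasDerivAt_id' v).sub_const b).log hvb)).add_const
      (3 / 2 * Real.log (T / A))).congr_deriv ?_
  field_simp
  ring

theorem deriv_energy_temperature_eq_mul_deriv_entropy (hA : A ≠ 0) (hT : T ≠ 0)
    (hvc : v - c ≠ 0) :
    deriv (fun T => energy a c T v) T = T * deriv (fun T => entropy A a b c T v) T := by
  rw [(hasDerivAt_energy_temperature hT hvc).deriv,
    (hasDerivAt_entropy_temperature hA hT hvc).deriv]
  field_simp

theorem deriv_energy_volume_eq_mul_deriv_entropy_sub_pressure (hT : T ≠ 0) (hvb : v - b ≠ 0)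
    (hvc : v - c ≠ 0) :
    deriv (fun v => energy a c T v) v =
      T * deriv (fun v => entropy A a b c T v) v - pressure a b c T v := by
  rw [(hasDerivAt_energy_volume hT hvc).deriv, (hasDerivAt_entropy_volume hT hvb hvc).deriv,
    pressure]
  field_simp
  ring

end ClausiusGas

open ClausiusGas in
/-- The first law du = T ds − P dv holds for the Clausius gas with
u = (3/2)T + 2a/(T(v−c)), s = a/(T²(v−c)) + ln(v−b) + (3/2)ln(T/A) and
P = T/(v−b) + a/(T(v−c)²). -/
theorem stmt_16 (A a b c : ℝ) (hA : 0 < A)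
    (u s P : ℝ → ℝ → ℝ)
    (hu : ∀ T v, u T v = (3/2) * T + 2 * a / (T * (v - c)))
    (hs : ∀ T v, s T v = a / (T ^ 2 * (v - c)) + Real.log (v - b) + (3/2) * Real.log (T / A))
    (hP : ∀ T v, P T v = T / (v - b) + a / (T * (v - c) ^ 2)) :
    ∀ T v : ℝ, 0 < T → max b c < v →
      deriv (fun T' => u T' v) T = T * deriv (fun T' => s T' v) T ∧
      deriv (fun v' => u T v') v = T * deriv (fun v' => s T v') v - P T v := by
  obtain rfl : u = energy a c := funext₂ hu
  obtain rfl : s = entropy A a b c := funext₂ hs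
  obtain rfl : P = pressure a b c := funext₂ hP
  intro T v hT hv
  obtain ⟨hbv, hcv⟩ := max_lt_iff.mp hv
  have hvb : v - b ≠ 0 := sub_ne_zero.mpr hbv.ne'
  have hvc : v - c ≠ 0 := sub_ne_zero.mpr hcv.ne'
  exact ⟨deriv_energy_temperature_eq_mul_deriv_entropy hA.ne' hT.ne' hvc,
    deriv_energy_volume_eq_mul_deriv_entropy_sub_pressure hT.ne' hvb hvc⟩
end

section
/- Fix p₀ ≠ 0 and let q, π : ℝ → ℝ be differentiable functions satisfying, for all t: dq/dt = −2π(t)/(5p₀) and dπ/dt = −(2/3)p₀ (q(t) + 2π(t)/(5p₀)). Then the function y(t) := π(t) + p₀ q(t) satisfies y(t) = y(0) e^{−(2/3)t} for all t. In particular, if π(0) = −p₀ q(0), then π(t) = −p₀ q(t) for all t, and hence dπ/dt = −p₀ dq/dt along the whole trajectory. -/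
/-!
Along the gauge-fixed flow the combination y = π + p₀q obeys the scalar linear equation
y' = -(2/3) y, the terms in π/p₀ cancelling; hence y(t) = y(0) e^{-(2/3)t}. If y(0) = 0 then
y vanishes identically, i.e. π = -p₀q, and differentiating this identity gives dπ/dt = -p₀ dq/dt.
-/

theorem eq_mul_exp_of_hasDerivAt_const_mul {f : ℝ → ℝ} {a : ℝ}
    (hf : ∀ t, HasDerivAt f (a * f t) t) (t : ℝ) : f t = f 0 * Real.exp (a * t) := by
  have hderiv : ∀ s, HasDerivAt (fun s => f s * Real.exp (-a * s)) 0 s := fun s => by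
    have hexp : HasDerivAt (fun s => Real.exp (-a * s)) (Real.exp (-a * s) * -a) s := by
      simpa using ((hasDerivAt_id s).const_mul (-a)).exp
    refine ((hf s).mul hexp).congr_deriv ?_
    ring
  have hconst := is_const_of_deriv_eq_zero (fun s => (hderiv s).differentiableAt)
    (fun s => (hderiv s).deriv) t 0
  simp only [mul_zero, Real.exp_zero, mul_one] at hconst
  rw [← hconst, mul_assoc, ← Real.exp_add, neg_mul, neg_add_cancel, Real.exp_zero, mul_one]

theorem hasDerivAt_isobaric_invariant {p₀ : ℝ} (hp₀ : p₀ ≠ 0) {q π : ℝ → ℝ} {t : ℝ}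
    (hq : HasDerivAt q (-2 * π t / (5 * p₀)) t)
    (hπ : HasDerivAt π (-(2/3) * p₀ * (q t + 2 * π t / (5 * p₀))) t) :
    HasDerivAt (fun t => π t + p₀ * q t) (-(2/3) * (π t + p₀ * q t)) t := by
  refine (hπ.add (hq.const_mul p₀)).congr_deriv ?_
  field_simp
  ring

/-- Gauge-fixed isobaric evolution of the ideal gas: y = π + p₀q satisfies
y(t) = y(0)e^{−(2/3)t}; in particular if π(0) = −p₀q(0) then π = −p₀q for all
times and dπ/dt = −p₀ dq/dt along the whole trajectory. -/
theorem stmt_18 (p₀ : ℝ) (hp₀ : p₀ ≠ 0) (q π : ℝ → ℝ)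
    (hq : ∀ t : ℝ, HasDerivAt q (-2 * π t / (5 * p₀)) t)
    (hπ : ∀ t : ℝ, HasDerivAt π (-(2/3) * p₀ * (q t + 2 * π t / (5 * p₀))) t) :
    (∀ t : ℝ, π t + p₀ * q t = (π 0 + p₀ * q 0) * Real.exp (-(2/3) * t)) ∧
    (π 0 = -(p₀ * q 0) →
      (∀ t : ℝ, π t = -(p₀ * q t)) ∧ ∀ t : ℝ, deriv π t = -p₀ * deriv q t) := by
  have hy : ∀ t, π t + p₀ * q t = (π 0 + p₀ * q 0) * Real.exp (-(2/3) * t) :=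
    eq_mul_exp_of_hasDerivAt_const_mul fun t =>
      hasDerivAt_isobaric_invariant hp₀ (hq t) (hπ t)
  refine ⟨hy, fun h0 => ?_⟩
  have hπq : ∀ t, π t = -(p₀ * q t) := fun t => by
    have := hy t
    rw [h0, neg_add_cancel, zero_mul] at this
    linarith
  have hπ_eq : π = fun t => -p₀ * q t := funext fun t => by rw [hπq t, neg_mul]
  refine ⟨hπq, fun t => ?_⟩
  rw [hπ_eq, deriv_const_mul _ (hq t).differentiableAt]
end
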